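/- arXiv:2110.07591 — 8 statements merged into one kernel-verified Lean document; each statement's English description precedes it below -/
import Mathlib

section
/- Let V be a vector space over a field K and let ℒ be a finite collection of linear subspaces of V that is closed under intersection and sum and is distributive: for all A, B, C ∈ ℒ one has (A + B) ∩ C = (A ∩ C) + (B ∩ C). Then there exists a basis of V such that every member of ℒ is the span of a subset of that basis (i.e. every member of ℒ is a coordinate subspace for this basis). -/
/-!
Adjoin `⊤` to `L`. For each `A ∈ L` choose a complement `W A` of the join of the members of `L`
strictly below `A`, inside `A`. By well-founded induction every `A ∈ L` is the join of the `W B`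
with `B ≤ A`. The `W A` are independent: adding a maximal `A` to a family of members of `L`,
distributivity gives `A ⊓ (B₁ ⊔ ⋯ ⊔ Bₙ) = (A ⊓ B₁) ⊔ ⋯ ⊔ (A ⊓ Bₙ)`, a join of members of `L`
strictly below `A`, which meets `W A` trivially. Gluing bases of the `W A` gives the basis.
-/

section SupBelow

variable {α : Type*} [CompleteLattice α] (s : Finset α)

def supBelow (a : α) : α := sSup {b | b ∈ s ∧ b < a}

variable {s}

theorem supBelow_le (a : α) : supBelow s a ≤ a :=
  sSup_le fun _ hb => hb.2.le

theorem le_supBelow {a b : α} (hb : b ∈ s) (hba : b < a) : b ≤ supBelow s a :=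
  le_sSup ⟨hb, hba⟩

theorem biSup_eq_of_supBelow_sup_eq {W : α → α} (hW : ∀ a ∈ s, supBelow s a ⊔ W a = a)
    {a : α} (ha : a ∈ s) : ⨆ b ∈ s, ⨆ _ : b ≤ a, W b = a := by
  refine le_antisymm (iSup₂_le fun b hb => iSup_le fun hba => ?_) ?_
  · exact (le_sup_right.trans (hW b hb).le).trans hba
  refine (s.finite_toSet.wellFoundedOn (r := (· < ·))).induction
    (P := fun a => a ≤ ⨆ b ∈ s, ⨆ _ : b ≤ a, W b) ha fun a ha ih => ?_
  refine (hW a ha).ge.trans <| sup_le (sSup_le fun b ⟨hb, hba⟩ => (ih b hb hba).trans ?_)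
    (le_iSup₂_of_le a ha (le_iSup_of_le le_rfl le_rfl))
  exact iSup₂_mono fun c _ => iSup_mono' fun hcb => ⟨hcb.trans hba.le, le_rfl⟩

section Distrib

variable (hsup : SupClosed (s : Set α)) (hinf : InfClosed (s : Set α))
  (hdist : ∀ a ∈ s, ∀ b ∈ s, ∀ c ∈ s, (a ⊔ b) ⊓ c = a ⊓ c ⊔ b ⊓ c)
include hsup hinf hdist

theorem inf_finsetSup_le_supBelow {a : α} (ha : a ∈ s) {t : Finset α} (hts : t ⊆ s)
    (hat : ∀ b ∈ t, ¬a ≤ b) : a ⊓ t.sup id ≤ supBelow s a := by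
  rcases t.eq_empty_or_nonempty with rfl | hne
  · simp
  induction hne using Finset.Nonempty.cons_induction with
  | singleton b =>
    rw [Finset.sup_singleton, id]
    have hb : b ∈ s := hts (Finset.mem_singleton_self b)
    exact le_supBelow (hinf ha hb) (inf_lt_left.2 (hat b (Finset.mem_singleton_self b)))
  | cons b t hbt hne ih =>
    rw [Finset.cons_subset] at hts
    simp only [Finset.sup_cons, id_eq, Finset.mem_cons, forall_eq_or_imp] at hat ⊢
    rw [inf_comm, hdist b hts.1 _ (hsup.finsetSup_mem (f := id) hne fun c hc => hts.2 hc) a ha,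
      inf_comm b, inf_comm (t.sup id)]
    exact sup_le (le_supBelow (hinf ha hts.1) (inf_lt_left.2 hat.1)) (ih hts.2 hat.2)

theorem supIndep_of_disjoint_supBelow [IsModularLattice α] {W : α → α}
    (hW : ∀ a ∈ s, W a ≤ a ∧ Disjoint (supBelow s a) (W a)) : s.SupIndep W := by
  classical
  suffices ∀ t ⊆ s, t.SupIndep W from this s le_rfl
  intro t
  induction t using Finset.strongInduction with
  | H t ih =>
    intro hts
    rcases t.eq_empty_or_nonempty with rfl | hne
    · exact Finset.supIndep_empty W
    obtain ⟨a, hmax⟩ := t.exists_maximal hne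
    have ha : a ∈ t := hmax.prop
    rw [← Finset.insert_erase ha]
    refine (ih _ (Finset.erase_ssubset ha) ((t.erase_subset a).trans hts)).insert ?_
    have hnot : ∀ b ∈ t.erase a, ¬a ≤ b := fun b hb hab =>
      Finset.ne_of_mem_erase hb (hmax.eq_of_le (Finset.mem_of_mem_erase hb) hab).symm
    obtain ⟨hWa, hdisj⟩ := hW a (hts ha)
    have hsupW : (t.erase a).sup W ≤ (t.erase a).sup id :=
      Finset.sup_mono_fun fun b hb => (hW b (hts (Finset.mem_of_mem_erase hb))).1
    refine disjoint_iff_inf_le.2 <| (le_inf inf_le_left ?_).trans hdisj.symm.eq_bot.le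
    exact (inf_le_inf hWa hsupW).trans
      (inf_finsetSup_le_supBelow hsup hinf hdist (hts ha) ((t.erase_subset a).trans hts) hnot)

end Distrib

end SupBelow

theorem distrib_insert_top {α : Type*} [Lattice α] [OrderTop α] {s : Set α}
    (hdist : ∀ a ∈ s, ∀ b ∈ s, ∀ c ∈ s, (a ⊔ b) ⊓ c = a ⊓ c ⊔ b ⊓ c) :
    ∀ a ∈ insert ⊤ s, ∀ b ∈ insert ⊤ s, ∀ c ∈ insert ⊤ s, (a ⊔ b) ⊓ c = a ⊓ c ⊔ b ⊓ c := by
  rintro a (rfl | ha) b (rfl | hb) c (rfl | hc) <;> simp [*]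

open Module in
theorem DirectSum.IsInternal.span_collectedBasis_image {R M ι : Type*} [Ring R]
    [AddCommGroup M] [Module R M] [DecidableEq ι] {A : ι → Submodule R M} {κ : ι → Type*}
    (h : DirectSum.IsInternal A) (v : ∀ i, Basis (κ i) R (A i)) (S : Set ι) :
    Submodule.span R (h.collectedBasis v '' {σ | σ.1 ∈ S}) = ⨆ i ∈ S, A i := by
  have hA : ∀ i, Submodule.span R (Set.range fun k => (v i k : M)) = A i := fun i => by
    rw [Set.range_comp' Subtype.val, Submodule.span_val_image_eq_iff, (v i).span_eq]
  have himage : h.collectedBasis v '' {σ | σ.1 ∈ S} = ⋃ i ∈ S, Set.range fun k => (v i k : M) := by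
    ext x
    simp [h.collectedBasis_coe]
  simp_rw [himage, Submodule.span_iUnion₂, hA]

/-- A finite distributive lattice of subspaces of a vector space `V` (closed under
intersection `⊓` and sum `⊔`, and satisfying `(A + B) ∩ C = (A ∩ C) + (B ∩ C)`) can be
simultaneously coordinatized: there is a basis of `V` such that every member of the
lattice is the span of a subset of the basis. -/
theorem exists_basis_of_finite_distributive_lattice
    {K : Type u} {V : Type v} [Field K] [AddCommGroup V] [Module K V]
    (L : Set (Submodule K V)) (hfin : L.Finite)
    (hinf : ∀ A ∈ L, ∀ B ∈ L, A ⊓ B ∈ L)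
    (hsup : ∀ A ∈ L, ∀ B ∈ L, A ⊔ B ∈ L)
    (hdist : ∀ A ∈ L, ∀ B ∈ L, ∀ C ∈ L, (A ⊔ B) ⊓ C = (A ⊓ C) ⊔ (B ⊓ C)) :
    ∃ (ι : Type v) (b : Module.Basis ι K V),
      ∀ A ∈ L, ∃ J : Set ι, A = Submodule.span K (b '' J) := by
  classical
  set s : Finset (Submodule K V) := insert ⊤ hfin.toFinset
  have hs : (s : Set (Submodule K V)) = insert ⊤ L := by simp [s]
  have hsup' : SupClosed (s : Set (Submodule K V)) :=
    hs ▸ SupClosed.insert_upperBounds (s := L) hsup fun _ _ => le_top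
  have hinf' : InfClosed (s : Set (Submodule K V)) :=
    hs ▸ InfClosed.insert_upperBounds (s := L) hinf fun _ _ => le_top
  have hdist' : ∀ A ∈ s, ∀ B ∈ s, ∀ C ∈ s, (A ⊔ B) ⊓ C = A ⊓ C ⊔ B ⊓ C := by
    simpa only [← Finset.mem_coe, hs] using distrib_insert_top hdist
  choose W hWdisj hWsup using fun A =>
    IsModularLattice.exists_disjoint_and_sup_eq (supBelow_le (s := s) A)
  have hWle : ∀ A, W A ≤ A := fun A => le_sup_right.trans (hWsup A).le
  have hspan : ∀ A ∈ s, ⨆ B : s, ⨆ _ : (B : Submodule K V) ≤ A, W B = A := fun A hA =>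
    iSup_subtype.trans (biSup_eq_of_supBelow_sup_eq (fun B _ => hWsup B) hA)
  have hind : iSupIndep fun A : s => W A :=
    (supIndep_of_disjoint_supBelow hsup' hinf' hdist' fun A _ => ⟨hWle A, hWdisj A⟩).independent
  have htop : ⨆ A : s, W A = ⊤ :=
    top_unique <| (hspan ⊤ (Finset.mem_insert_self _ _)).ge.trans <|
      iSup_mono fun _ => iSup_le fun _ => le_rfl
  have hint := DirectSum.isInternal_submodule_of_iSupIndep_of_iSup_eq_top hind htop
  refine ⟨_, hint.collectedBasis fun A => Module.Basis.ofVectorSpace K (W A), fun A hA =>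
    ⟨{σ | σ.1 ∈ {B : s | (B : Submodule K V) ≤ A}}, ?_⟩⟩
  rw [hint.span_collectedBasis_image]
  exact (hspan A (Finset.mem_insert_of_mem (hfin.mem_toFinset.2 hA))).symm
end

section
/- For the ℂ-vector space ℂ[t] of polynomials in one variable, and for every basis (b_i)_{i∈I} of ℂ[t], there exists x ∈ ℂ such that the hyperplane H_x = {p ∈ ℂ[t] : p(x) = 0} is NOT the span of any subset of the basis (b_i). In particular, no single basis of ℂ[t] makes all the subspaces H_x, x ∈ ℂ, simultaneously coordinate subspaces. -/
/-!
If `ker (eval x)` is spanned by basis vectors, then at most one basis vector can be nonzero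
at `x`. So for two distinct basis vectors `b j`, `b k`, at every point one of them vanishes;
then `b j * b k` vanishes on all of `ℂ`, hence is the zero polynomial, which is impossible in
the domain `ℂ[t]`.
-/

open Polynomial

namespace Module.Basis

variable {ι R M : Type*} [CommRing R] [AddCommGroup M] [Module R M]

theorem subsingleton_setOf_apply_ne_zero_of_ker_eq_span (b : Basis ι R M) (f : M →ₗ[R] R)
    {J : Set ι} (hJ : LinearMap.ker f = Submodule.span R (b '' J)) :
    {i | f (b i) ≠ 0}.Subsingleton := by
  intro i hi i' hi'
  by_contra hne
  -- `f (b i') • b i - f (b i) • b i'` lies in `ker f` but has a nonzero `i`-th coordinate.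
  have hmem : f (b i') • b i - f (b i) • b i' ∈ Submodule.span R (b '' J) := by
    rw [← hJ, LinearMap.mem_ker, map_sub, map_smul, map_smul, smul_eq_mul, smul_eq_mul,
      mul_comm, sub_self]
  have hcoord : b.repr (f (b i') • b i - f (b i) • b i') i = f (b i') := by
    simp [hne]
  have hiJ : i ∈ J := b.mem_span_image.mp hmem <| by
    rw [Finset.mem_coe, Finsupp.mem_support_iff, hcoord]
    exact hi'
  exact hi (hJ ▸ Submodule.subset_span ⟨i, hiJ, rfl⟩ : b i ∈ LinearMap.ker f)

end Module.Basis

theorem Polynomial.eq_zero_or_eq_zero_of_forall_eval {R : Type*} [CommRing R] [IsDomain R]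
    [Infinite R] {p q : R[X]} (h : ∀ x, p.eval x = 0 ∨ q.eval x = 0) : p = 0 ∨ q = 0 :=
  mul_eq_zero.mp <| Polynomial.funext fun x => by simp [mul_eq_zero, h x]

/-- For any basis of `ℂ[t]` as a `ℂ`-vector space, there is some `x ∈ ℂ` such that the
hyperplane `H_x = {p : p(x) = 0}` (the kernel of evaluation at `x`) is not spanned by a
subset of the basis.  In particular no single basis makes all the `H_x` simultaneously
coordinate subspaces. -/
theorem exists_eval_ker_not_coordinate_subspace
    {ι : Type*} (b : Module.Basis ι ℂ (Polynomial ℂ)) :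
    ∃ x : ℂ, ¬ ∃ J : Set ι,
      LinearMap.ker ((Polynomial.aeval x : Polynomial ℂ →ₐ[ℂ] ℂ).toLinearMap)
        = Submodule.span ℂ (b '' J) := by
  by_contra! h
  have : Infinite ι := (b.indexEquiv (basisMonomials ℂ)).infinite_iff.mpr inferInstance
  obtain ⟨j, k, hjk⟩ := exists_pair_ne ι
  have hvanish : ∀ x : ℂ, (b j).eval x = 0 ∨ (b k).eval x = 0 := fun x => by
    obtain ⟨J, hJ⟩ := h x
    by_contra! hne
    exact hjk (b.subsingleton_setOf_apply_ne_zero_of_ker_eq_span _ hJ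
      (by simpa using hne.1) (by simpa using hne.2))
  exact (eq_zero_or_eq_zero_of_forall_eval hvanish).elim (b.ne_zero j) (b.ne_zero k)
end

section
/- If the sequence (f₁,…,fₙ) of pairwise commuting homogeneous positive-degree endomorphisms of the ℕ-graded ℂ-vector space M is regular, then M is a free module over the polynomial ring ℂ[z₁,…,zₙ], where zᵢ acts as fᵢ. -/
/-!
Induct on `n`. Regularity makes `f₁` injective, and `M̄ = M ⧸ f₁M` is graded by the images of the
`Mₑ` (as `f₁M` is homogeneous), with `f₂, …, fₙ` inducing a regular sequence of commuting maps of
positive degree. By induction `M̄` has a basis `f₂^{a₂}⋯fₙ^{aₙ} w̄ⱼ` with homogeneous `w̄ⱼ`; lift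
them to homogeneous `wⱼ ∈ M`. The family `f₁^{a₁}⋯fₙ^{aₙ} wⱼ` is independent because `f₁` is
injective and the `a₁ = 0` part is independent modulo `f₁M`; it spans by graded Nakayama, since
its span is homogeneous, `f₁`-stable and surjects onto `M̄`.
-/

universe v

/-- The composite operator `f₁^{a₁} ∘ ⋯ ∘ fₙ^{aₙ}`, the action of the monomial
`z₁^{a₁}⋯zₙ^{aₙ}` when `zᵢ` acts as `fᵢ`. -/
noncomputable def monOp {M : Type v} [AddCommGroup M] [Module ℂ M] {n : ℕ}
    (f : Fin n → M →ₗ[ℂ] M) (a : Fin n → ℕ) : M →ₗ[ℂ] M :=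
  (List.ofFn fun i => (f i) ^ (a i)).prod

open DirectSum SetLike Submodule

section Graded

variable {ι R M : Type*} [DecidableEq ι] [Ring R] [AddCommGroup M] [Module R M]
  (ℳ : ι → Submodule R M) [Decomposition ℳ]

def gradedProj (i : ι) : Module.End R M :=
  (ℳ i).subtype ∘ₗ component R ι (fun i => ℳ i) i ∘ₗ
    (decomposeLinearEquiv ℳ).toLinearMap

lemma gradedProj_mem (i : ι) (m : M) : gradedProj ℳ i m ∈ ℳ i :=
  (decompose ℳ m i).2

lemma gradedProj_of_mem {i j : ι} {m : M} (hm : m ∈ ℳ j) :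
    gradedProj ℳ i m = if j = i then m else 0 := by
  split_ifs with h
  · subst h; exact decompose_of_mem_same ℳ hm
  · exact decompose_of_mem_ne ℳ hm h

lemma isHomogeneous_span {s : Set M} (hs : ∀ x ∈ s, IsHomogeneousElem ℳ x) :
    IsHomogeneous ℳ (span R s) := by
  intro i
  suffices span R s ≤ (span R s).comap (gradedProj ℳ i) from fun m hm => this hm
  refine span_le.2 fun x hx => ?_
  obtain ⟨j, hj⟩ := hs x hx
  change gradedProj ℳ i x ∈ span R s
  rw [gradedProj_of_mem ℳ hj]
  split_ifs
  exacts [subset_span hx, zero_mem _]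

lemma isHomogeneous_range {f : M →ₗ[R] M}
    (hf : ∀ m, IsHomogeneousElem ℳ m → IsHomogeneousElem ℳ (f m)) :
    IsHomogeneous ℳ (LinearMap.range f) := by
  have hspan : span R {m | IsHomogeneousElem ℳ m} = ⊤ := by
    rw [eq_top_iff, ← (Decomposition.isInternal ℳ).submodule_iSup_eq_top]
    exact iSup_le fun i m hm => subset_span ⟨i, hm⟩
  rw [LinearMap.range_eq_map, ← hspan, map_span]
  exact isHomogeneous_span ℳ fun _ ⟨m, hm, hfm⟩ => hfm ▸ hf m hm

lemma gradedProj_eq_zero_of_mem_iSup_ne {i : ι} {m : M} (hm : m ∈ ⨆ j, ⨆ _ : j ≠ i, ℳ j) :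
    gradedProj ℳ i m = 0 := by
  suffices (⨆ j, ⨆ _ : j ≠ i, ℳ j) ≤ LinearMap.ker (gradedProj ℳ i) from this hm
  exact iSup₂_le fun j hj x hx => by
    rw [LinearMap.mem_ker, gradedProj_of_mem ℳ hx, if_neg hj]

lemma isInternal_map_mkQ {p : Submodule R M} (hp : IsHomogeneous ℳ p) :
    IsInternal fun i => (ℳ i).map p.mkQ := by
  rw [isInternal_submodule_iff_iSupIndep_and_iSup_eq_top]
  refine ⟨fun i => disjoint_def.2 ?_, ?_⟩
  · rintro _ ⟨a, ha, rfl⟩ hb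
    simp_rw [← Submodule.map_iSup] at hb
    obtain ⟨b, hb, hab⟩ := hb
    have hdiff : gradedProj ℳ i (a - b) ∈ p := hp i ((Submodule.Quotient.eq p).1 hab.symm)
    rw [map_sub, gradedProj_eq_zero_of_mem_iSup_ne ℳ hb, sub_zero, gradedProj_of_mem ℳ ha,
      if_pos rfl] at hdiff
    exact (Submodule.Quotient.mk_eq_zero p).2 hdiff
  · rw [← Submodule.map_iSup, (Decomposition.isInternal ℳ).submodule_iSup_eq_top,
      Submodule.map_top, range_mkQ]

end Graded

section GradedNakayama

variable {R M : Type*} [Ring R] [AddCommGroup M] [Module R M]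
  (ℳ : ℕ → Submodule R M) [Decomposition ℳ] {f : Module.End R M} {d : ℕ}

lemma gradedProj_add_comp (hf : ∀ e, ∀ m ∈ ℳ e, f m ∈ ℳ (e + d)) (e : ℕ) :
    gradedProj ℳ (e + d) ∘ₗ f = f ∘ₗ gradedProj ℳ e := by
  refine decompose_lhom_ext ℳ fun j => LinearMap.ext fun ⟨m, hm⟩ => ?_
  simp only [LinearMap.comp_apply, subtype_apply, gradedProj_of_mem ℳ (hf j m hm),
    gradedProj_of_mem ℳ hm, Nat.add_right_cancel_iff]
  split_ifs <;> simp

lemma gradedProj_comp_of_lt (hf : ∀ e, ∀ m ∈ ℳ e, f m ∈ ℳ (e + d)) {e : ℕ} (he : e < d) :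
    gradedProj ℳ e ∘ₗ f = 0 := by
  refine decompose_lhom_ext ℳ fun j => LinearMap.ext fun ⟨m, hm⟩ => ?_
  simp only [LinearMap.comp_apply, subtype_apply, gradedProj_of_mem ℳ (hf j m hm),
    LinearMap.zero_apply]
  rw [if_neg (by omega)]

/-- Graded Nakayama lemma. -/
theorem eq_top_of_sup_range_eq_top (hf : ∀ e, ∀ m ∈ ℳ e, f m ∈ ℳ (e + d)) (hd : 0 < d)
    {N : Submodule R M} (hN : IsHomogeneous ℳ N) (hfN : N ≤ N.comap f)
    (hsup : N ⊔ LinearMap.range f = ⊤) : N = ⊤ := by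
  rw [eq_top_iff, ← (Decomposition.isInternal ℳ).submodule_iSup_eq_top]
  refine iSup_le fun e => ?_
  induction e using Nat.strong_induction_on with
  | _ e ih =>
  intro m hm
  obtain ⟨x, hx, _, ⟨y, rfl⟩, hxy⟩ :=
    mem_sup.1 (hsup ▸ mem_top : m ∈ N ⊔ LinearMap.range f)
  have hm_eq : m = gradedProj ℳ e x + gradedProj ℳ e (f y) := by
    rw [← map_add, hxy, gradedProj_of_mem ℳ hm, if_pos rfl]
  rw [hm_eq]
  refine N.add_mem (hN e hx) ?_
  rcases lt_or_ge e d with he | he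
  · rw [← LinearMap.comp_apply, gradedProj_comp_of_lt ℳ hf he, LinearMap.zero_apply]
    exact N.zero_mem
  · obtain ⟨e, rfl⟩ := Nat.exists_eq_add_of_le' he
    rw [← LinearMap.comp_apply, gradedProj_add_comp ℳ hf, LinearMap.comp_apply]
    exact hfN (ih e (by omega) (gradedProj_mem ℳ e y))

end GradedNakayama

section PowIndependence

variable {R M κ : Type*} [Ring R] [AddCommGroup M] [Module R M] {f : Module.End R M}
  {u : κ → M}

lemma linearIndependent_pow_apply_fin (hf : Function.Injective f)
    (hu : LinearIndependent R ((LinearMap.range f).mkQ ∘ u)) (N : ℕ) :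
    LinearIndependent R fun p : Fin N × κ => (f ^ (p.1 : ℕ)) (u p.2) := by
  induction N with
  | zero => exact linearIndependent_empty_type
  | succ N ih =>
    -- the terms with positive exponent are the image under `f` of the family for `N`
    have hsum := LinearIndependent.sumElim_of_quotient
      (f := fun p : Fin N × κ => (⟨_, LinearMap.mem_range_self f ((f ^ (p.1 : ℕ)) (u p.2))⟩ :
        LinearMap.range f))
      ((ih.map' f (LinearMap.ker_eq_bot.2 hf)).of_comp (LinearMap.range f).subtype) u hu
    let split : Fin (N + 1) × κ → (Fin N × κ) ⊕ κ := fun p =>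
      Fin.cases (Sum.inr p.2) (fun i => Sum.inl (i, p.2)) p.1
    have hsplit : Function.Injective split := by
      rintro ⟨i, q⟩ ⟨j, r⟩ h
      cases i using Fin.cases <;> cases j using Fin.cases <;> simp_all [split]
    convert hsum.comp split hsplit using 1
    ext ⟨i, q⟩
    cases i using Fin.cases <;> simp [split, pow_succ']

lemma linearIndependent_pow_apply (hf : Function.Injective f)
    (hu : LinearIndependent R ((LinearMap.range f).mkQ ∘ u)) :
    LinearIndependent R fun p : ℕ × κ => (f ^ p.1) (u p.2) := by
  refine linearIndependent_iff_finset_linearIndependent.2 fun s => ?_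
  let N := s.sup Prod.fst + 1
  let emb : s → Fin N × κ := fun p =>
    (⟨p.1.1, Nat.lt_succ_of_le (s.le_sup (f := Prod.fst) p.2)⟩, p.1.2)
  have hemb : Function.Injective emb := by
    rintro ⟨⟨a, q⟩, _⟩ ⟨⟨b, r⟩, _⟩ h
    simp_all [emb]
  exact (linearIndependent_pow_apply_fin hf hu N).comp emb hemb

end PowIndependence

section MonomialOperators

variable {M N : Type*} [AddCommGroup M] [Module ℂ M] [AddCommGroup N] [Module ℂ N]

lemma monOp_fin_zero (f : Fin 0 → Module.End ℂ M) (a : Fin 0 → ℕ) : monOp f a = 1 := by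
  simp [monOp]

lemma monOp_succ {n : ℕ} (f : Fin (n + 1) → Module.End ℂ M) (a : Fin (n + 1) → ℕ) :
    monOp f a = f 0 ^ a 0 * monOp (Fin.tail f) (Fin.tail a) := by
  rw [monOp, List.ofFn_succ, List.prod_cons, monOp]
  rfl

lemma comp_monOp {n : ℕ} (π : M →ₗ[ℂ] N) {f : Fin n → Module.End ℂ M}
    {g : Fin n → Module.End ℂ N} (h : ∀ i, π ∘ₗ f i = g i ∘ₗ π) (a : Fin n → ℕ) :
    π ∘ₗ monOp f a = monOp g a ∘ₗ π := by
  induction n with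
  | zero => simp [monOp_fin_zero, Module.End.one_eq_id]
  | succ n ih =>
    rw [monOp_succ, monOp_succ, Module.End.mul_eq_comp, Module.End.mul_eq_comp,
      ← LinearMap.comp_assoc, ← Module.End.commute_pow_left_of_commute (h 0).symm,
      LinearMap.comp_assoc, ih (f := Fin.tail f) (g := Fin.tail g) fun i => h i.succ,
      LinearMap.comp_assoc]

lemma isHomogeneousElem_monOp_apply {ι : Type*} (ℳ : ι → Submodule ℂ M) {n : ℕ}
    {f : Fin n → Module.End ℂ M}
    (hf : ∀ i m, IsHomogeneousElem ℳ m → IsHomogeneousElem ℳ (f i m)) (a : Fin n → ℕ) {m : M}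
    (hm : IsHomogeneousElem ℳ m) : IsHomogeneousElem ℳ (monOp f a m) := by
  let S : Submonoid (Module.End ℂ M) :=
    { carrier := {g | ∀ m, IsHomogeneousElem ℳ m → IsHomogeneousElem ℳ (g m)}
      mul_mem' := fun hg hg' m hm => hg _ (hg' m hm)
      one_mem' := fun _ hm => hm }
  have hmem : monOp f a ∈ S := S.list_prod_mem fun g hg => by
    obtain ⟨i, rfl⟩ := (List.mem_ofFn' _ g).1 hg
    exact pow_mem (show f i ∈ S from hf i) (a i)
  exact hmem m hm

end MonomialOperators

section RegularSequence

variable {R M : Type*} [Ring R] [AddCommGroup M] [Module R M] {n : ℕ}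

def initialRangeSup (f : Fin n → Module.End R M) (k : Fin n) : Submodule R M :=
  ⨆ i : Fin n, ⨆ _ : i < k, LinearMap.range (f i)

def IsRegularSeq (f : Fin n → Module.End R M) : Prop :=
  ∀ k m, f k m ∈ initialRangeSup f k → m ∈ initialRangeSup f k

lemma initialRangeSup_zero (f : Fin (n + 1) → Module.End R M) : initialRangeSup f 0 = ⊥ := by
  simp [initialRangeSup]

lemma IsRegularSeq.injective_zero {f : Fin (n + 1) → Module.End R M} (hf : IsRegularSeq f) :
    Function.Injective (f 0) := by
  refine (injective_iff_map_eq_zero _).2 fun m hm => ?_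
  have := hf 0 m
  simpa [initialRangeSup_zero, hm] using this

lemma initialRangeSup_succ (f : Fin (n + 1) → Module.End R M) (k : Fin n) :
    initialRangeSup f k.succ = LinearMap.range (f 0) ⊔ initialRangeSup (Fin.tail f) k := by
  refine le_antisymm (iSup₂_le fun i hi => ?_) (sup_le ?_ (iSup₂_le fun i hi => ?_))
  · induction i using Fin.cases with
    | zero => exact le_sup_left
    | succ i => exact le_sup_of_le_right (le_iSup₂_of_le (f := fun i (_ : i < k) =>
        LinearMap.range (Fin.tail f i)) i (Fin.succ_lt_succ_iff.1 hi) le_rfl)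
  · exact le_iSup₂_of_le (f := fun i (_ : i < k.succ) => LinearMap.range (f i)) 0
      (Fin.succ_pos k) le_rfl
  · exact le_iSup₂_of_le (f := fun i (_ : i < k.succ) => LinearMap.range (f i)) i.succ
      (Fin.succ_lt_succ_iff.2 hi) le_rfl

lemma range_le_comap_range_of_commute {f g : Module.End R M} (h : Commute f g) :
    LinearMap.range f ≤ (LinearMap.range f).comap g := by
  rintro _ ⟨m, rfl⟩
  exact ⟨g m, LinearMap.congr_fun h.eq m⟩

variable (f : Fin (n + 1) → Module.End R M)
  (hf : ∀ i, LinearMap.range (f 0) ≤ (LinearMap.range (f 0)).comap (f i))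

def tailMapQ : Fin n → Module.End R (M ⧸ LinearMap.range (f 0)) := fun i =>
  (LinearMap.range (f 0)).mapQ _ (f i.succ) (hf i.succ)

lemma mkQ_comp_tailMapQ (i : Fin n) :
    (LinearMap.range (f 0)).mkQ ∘ₗ Fin.tail f i =
      tailMapQ f hf i ∘ₗ (LinearMap.range (f 0)).mkQ :=
  (mapQ_mkQ _ _ _).symm

lemma commute_tailMapQ {i j : Fin n} (h : Commute (f i.succ) (f j.succ)) :
    Commute (tailMapQ f hf i) (tailMapQ f hf j) := by
  refine Submodule.linearMap_qext _ (LinearMap.ext fun m => ?_)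
  simpa [tailMapQ] using congrArg _ (LinearMap.congr_fun h.eq m)

lemma range_tailMapQ (i : Fin n) :
    LinearMap.range (tailMapQ f hf i) =
      (LinearMap.range (Fin.tail f i)).map (LinearMap.range (f 0)).mkQ := by
  rw [← LinearMap.range_comp, mkQ_comp_tailMapQ, LinearMap.range_comp, range_mkQ,
    Submodule.map_top]

lemma initialRangeSup_tailMapQ (k : Fin n) :
    initialRangeSup (tailMapQ f hf) k =
      (initialRangeSup (Fin.tail f) k).map (LinearMap.range (f 0)).mkQ := by
  simp only [initialRangeSup, Submodule.map_iSup, range_tailMapQ]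

lemma IsRegularSeq.tailMapQ (hreg : IsRegularSeq f) : IsRegularSeq (tailMapQ f hf) := by
  intro k m hm
  obtain ⟨m, rfl⟩ := (LinearMap.range (f 0)).mkQ_surjective m
  rw [initialRangeSup_tailMapQ] at hm ⊢
  have hfm : f k.succ m ∈ initialRangeSup f k.succ := by
    rw [initialRangeSup_succ, ← comap_map_mkQ]
    exact hm
  have := hreg k.succ m hfm
  rw [initialRangeSup_succ, ← comap_map_mkQ] at this
  exact this

end RegularSequence

section FreeBasis

variable {M : Type v} [AddCommGroup M] [Module ℂ M] {ι : Type*} {n : ℕ}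

lemma linearIndependent_monOp_succ {f : Fin (n + 1) → Module.End ℂ M}
    (hinj : Function.Injective (f 0)) {v : ι → M}
    (hv : LinearIndependent ℂ fun q : (Fin n → ℕ) × ι =>
      (LinearMap.range (f 0)).mkQ (monOp (Fin.tail f) q.1 (v q.2))) :
    LinearIndependent ℂ fun q : (Fin (n + 1) → ℕ) × ι => monOp f q.1 (v q.2) := by
  have hsplit :
      Function.Injective fun q : (Fin (n + 1) → ℕ) × ι => (q.1 0, Fin.tail q.1, q.2) := by
    rintro ⟨a, j⟩ ⟨b, k⟩ h
    simp only [Prod.mk.injEq] at h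
    obtain ⟨h0, htail, rfl⟩ := h
    rw [← Fin.cons_self_tail a, ← Fin.cons_self_tail b, h0, htail]
  have hfamily : (fun q : (Fin (n + 1) → ℕ) × ι => monOp f q.1 (v q.2)) =
      (fun p => (f 0 ^ p.1) (monOp (Fin.tail f) p.2.1 (v p.2.2))) ∘
        fun q => (q.1 0, Fin.tail q.1, q.2) := by
    ext q
    simp [monOp_succ]
  rw [hfamily]
  exact (linearIndependent_pow_apply hinj hv).comp _ hsplit

lemma span_monOp_succ_eq_top (ℳ : ℕ → Submodule ℂ M) [Decomposition ℳ]
    {f : Fin (n + 1) → Module.End ℂ M}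
    (hf : ∀ i, ∃ d, 0 < d ∧ ∀ e, ∀ m ∈ ℳ e, f i m ∈ ℳ (e + d)) {v : ι → M}
    (hv : ∀ j, IsHomogeneousElem ℳ (v j))
    (hspan : span ℂ (Set.range fun q : (Fin n → ℕ) × ι =>
      (LinearMap.range (f 0)).mkQ (monOp (Fin.tail f) q.1 (v q.2))) = ⊤) :
    span ℂ (Set.range fun q : (Fin (n + 1) → ℕ) × ι => monOp f q.1 (v q.2)) = ⊤ := by
  have hmonOp_cons (k : ℕ) (a : Fin n → ℕ) (j : ι) :
      monOp f (Fin.cons k a) (v j) = (f 0 ^ k) (monOp (Fin.tail f) a (v j)) := by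
    simp [monOp_succ]
  obtain ⟨d, hd, hf₀⟩ := hf 0
  refine eq_top_of_sup_range_eq_top ℳ hf₀ hd ?_ ?_ ?_
  · refine isHomogeneous_span ℳ ?_
    rintro _ ⟨q, rfl⟩
    refine isHomogeneousElem_monOp_apply ℳ (fun i m ⟨e, hm⟩ => ?_) q.1 (hv q.2)
    obtain ⟨d, -, hfi⟩ := hf i
    exact ⟨e + d, hfi e m hm⟩
  · refine span_le.2 ?_
    rintro _ ⟨⟨a, j⟩, rfl⟩
    refine subset_span ⟨(Fin.cons (a 0 + 1) (Fin.tail a), j), ?_⟩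
    simp only [hmonOp_cons, monOp_succ f a, pow_succ', Module.End.mul_apply]
  · rw [sup_comm, ← map_mkQ_eq_top, eq_top_iff, ← hspan, span_le]
    rintro _ ⟨⟨a, j⟩, rfl⟩
    refine ⟨monOp f (Fin.cons 0 a) (v j), subset_span ⟨(Fin.cons 0 a, j), rfl⟩, ?_⟩
    simp [hmonOp_cons]

lemma exists_homogeneous_monOp_basis_fin_zero (ℳ : ℕ → Submodule ℂ M) (hgr : IsInternal ℳ)
    (f : Fin 0 → Module.End ℂ M) :
    ∃ (ι : Type v) (v : ι → M), (∀ j, IsHomogeneousElem ℳ (v j)) ∧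
      LinearIndependent ℂ (fun q : (Fin 0 → ℕ) × ι => monOp f q.1 (v q.2)) ∧
      span ℂ (Set.range fun q : (Fin 0 → ℕ) × ι => monOp f q.1 (v q.2)) = ⊤ := by
  let b := hgr.collectedBasis fun d => Module.Basis.ofVectorSpace ℂ (ℳ d)
  have hfamily : (fun q : (Fin 0 → ℕ) × _ => monOp f q.1 (b q.2)) = b ∘ Prod.snd := by
    ext q
    simp [monOp_fin_zero]
  refine ⟨_, b, fun j => ⟨j.1, hgr.collectedBasis_mem _ j⟩, ?_, ?_⟩
  · rw [hfamily]
    exact b.linearIndependent.comp _ fun p q h => Prod.ext (Subsingleton.elim _ _) h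
  · rw [hfamily, Prod.snd_surjective.range_comp, b.span_eq]

theorem exists_homogeneous_monOp_basis (ℳ : ℕ → Submodule ℂ M) (hgr : IsInternal ℳ)
    (f : Fin n → Module.End ℂ M) (hcomm : ∀ i j, Commute (f i) (f j))
    (hf : ∀ i, ∃ d, 0 < d ∧ ∀ e, ∀ m ∈ ℳ e, f i m ∈ ℳ (e + d)) (hreg : IsRegularSeq f) :
    ∃ (ι : Type v) (v : ι → M), (∀ j, IsHomogeneousElem ℳ (v j)) ∧
      LinearIndependent ℂ (fun q : (Fin n → ℕ) × ι => monOp f q.1 (v q.2)) ∧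
      span ℂ (Set.range fun q : (Fin n → ℕ) × ι => monOp f q.1 (v q.2)) = ⊤ := by
  induction n generalizing M with
  | zero => exact exists_homogeneous_monOp_basis_fin_zero ℳ hgr f
  | succ n ih =>
    let := hgr.chooseDecomposition
    let K := LinearMap.range (f 0)
    have hK i : K ≤ K.comap (f i) := range_le_comap_range_of_commute (hcomm 0 i)
    let g := tailMapQ f hK
    have hKhom : IsHomogeneous ℳ K := isHomogeneous_range ℳ fun m ⟨e, hm⟩ => by
      obtain ⟨d, -, hf₀⟩ := hf 0
      exact ⟨e + d, hf₀ e m hm⟩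
    have hg i :
        ∃ d, 0 < d ∧ ∀ e, ∀ m ∈ (ℳ e).map K.mkQ, g i m ∈ (ℳ (e + d)).map K.mkQ := by
      obtain ⟨d, hd, hfi⟩ := hf i.succ
      exact ⟨d, hd, fun e _ ⟨m, hm, hmw⟩ => ⟨f i.succ m, hfi e m hm, hmw ▸ rfl⟩⟩
    obtain ⟨ι, w, hw, hw_ind, hw_span⟩ := ih _ (isInternal_map_mkQ ℳ hKhom) g
      (fun i j => commute_tailMapQ f hK (hcomm i.succ j.succ)) hg (hreg.tailMapQ f hK)
    have hlift j : ∃ v, IsHomogeneousElem ℳ v ∧ K.mkQ v = w j := by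
      obtain ⟨e, v, hv, hvw⟩ := hw j
      exact ⟨v, ⟨e, hv⟩, hvw⟩
    choose v hv hvw using hlift
    have hmkQ : (fun q : (Fin n → ℕ) × ι => K.mkQ (monOp (Fin.tail f) q.1 (v q.2))) =
        fun q => monOp g q.1 (w q.2) := by
      ext ⟨a, j⟩
      rw [← hvw, ← LinearMap.comp_apply, comp_monOp _ (mkQ_comp_tailMapQ f hK),
        LinearMap.comp_apply]
    refine ⟨ι, v, hv, linearIndependent_monOp_succ hreg.injective_zero ?_,
      span_monOp_succ_eq_top ℳ hf hv ?_⟩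
    · rwa [hmkQ]
    · rwa [hmkQ]

end FreeBasis

/-- If `(f₁,…,fₙ)` is a regular sequence of pairwise commuting homogeneous
positive-degree endomorphisms of an `ℕ`-graded `ℂ`-vector space `M`, then `M` is free
over `ℂ[z₁,…,zₙ]` (with `zᵢ` acting as `fᵢ`): there are elements `v j` such that the
family of all `f₁^{a₁}⋯fₙ^{aₙ}(v j)` is a `ℂ`-basis of `M`. -/
theorem free_of_regular_sequence
    {M : Type v} [AddCommGroup M] [Module ℂ M]
    (ℳ : ℕ → Submodule ℂ M) (hgr : DirectSum.IsInternal ℳ)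
    {n : ℕ} (f : Fin n → M →ₗ[ℂ] M)
    (hcomm : ∀ i j, (f i) ∘ₗ (f j) = (f j) ∘ₗ (f i))
    (hhomog : ∀ i, ∃ d : ℕ, 1 ≤ d ∧ ∀ e : ℕ, ∀ m ∈ ℳ e, f i m ∈ ℳ (e + d))
    (hreg : ∀ k : Fin n, ∀ m : M,
      f k m ∈ (⨆ i : Fin n, ⨆ _ : i < k, LinearMap.range (f i)) →
      m ∈ (⨆ i : Fin n, ⨆ _ : i < k, LinearMap.range (f i))) :
    ∃ (ι : Type v) (v : ι → M),
      LinearIndependent ℂ (fun q : (Fin n → ℕ) × ι => monOp f q.1 (v q.2)) ∧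
      Submodule.span ℂ (Set.range fun q : (Fin n → ℕ) × ι => monOp f q.1 (v q.2)) = ⊤ := by
  obtain ⟨ι, v, -, hind, hspan⟩ := exists_homogeneous_monOp_basis ℳ hgr f hcomm hhomog hreg
  exact ⟨ι, v, hind, hspan⟩
end

section
/- If the ℕ-graded ℂ-vector space M is free as a module over the polynomial ring ℂ[z₁,…,zₙ] (with zᵢ acting as fᵢ, where f₁,…,fₙ are pairwise commuting homogeneous positive-degree endomorphisms), then: (1) each fᵢ is injective; (2) for all i ≠ j, fᵢ(M) ∩ fⱼ(M) = fᵢ(fⱼ(M)); and (3) the subspaces fᵢ(M) generate a distributive lattice, concretely: for all subsets S, T ⊆ {1,…,n}, (∑_{i∈S} fᵢ(M)) ∩ (∑_{j∈T} fⱼ(M)) = ∑_{i∈S, j∈T} (fᵢ(M) ∩ fⱼ(M)). -/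
theorem Set.range_add_const {β : Type*} [AddCommMonoid β] [PartialOrder β]
    [CanonicallyOrderedAdd β] (c : β) : Set.range (· + c) = Set.Ici c := by
  ext a
  simp [le_iff_exists_add', eq_comm]

theorem Set.image_prodMap_add_const_range {β ι : Type*} [AddCommMonoid β] [Lattice β]
    [CanonicallyOrderedAdd β] [IsOrderedCancelAddMonoid β] {c d : β} (h : c ⊔ d = c + d) :
    Prod.map (· + c) id '' Set.range (Prod.map (· + d) (id : ι → ι))
      = Set.range (Prod.map (· + c) (id : ι → ι)) ∩ Set.range (Prod.map (· + d) id) := by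
  simp only [Set.range_prodMap, Set.range_add_const, Set.range_id, Set.prodMap_image_prod,
    Set.image_id, Set.prod_inter_prod, Set.Ici_inter_Ici, Set.image_add_const_Ici, h,
    add_comm d, Set.inter_self]

theorem Pi.single_sup_single_of_ne {α : Type*} [DecidableEq α] {i j : α} (hij : i ≠ j)
    (a b : ℕ) : (Pi.single i a ⊔ Pi.single j b : α → ℕ) = Pi.single i a + Pi.single j b := by
  ext k
  by_cases hi : k = i <;> by_cases hj : k = j <;> simp_all

theorem Finset.sup_map_inf_sup_map {F α β ι κ : Type*} [DistribLattice α] [OrderBot α]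
    [Lattice β] [OrderBot β] [FunLike F α β] [SupBotHomClass F α β] [InfHomClass F α β]
    (Φ : F) (s : Finset ι) (t : Finset κ) (g : ι → α) (h : κ → α) :
    (s.sup fun i => Φ (g i)) ⊓ (t.sup fun j => Φ (h j))
      = (s ×ˢ t).sup fun p => Φ (g p.1) ⊓ Φ (h p.2) := by
  calc _ = Φ (s.sup g ⊓ t.sup h) := by rw [map_inf, map_finset_sup, map_finset_sup]; rfl
    _ = _ := by simp only [Finset.sup_inf_sup, map_finset_sup, Function.comp_def, map_inf]

namespace Module.Basis

variable {κ R M : Type*} [Semiring R] [AddCommMonoid M] [Module R M] (B : Basis κ R M)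

theorem span_image_inf_span_image (s t : Set κ) :
    Submodule.span R (B '' s) ⊓ Submodule.span R (B '' t) = Submodule.span R (B '' (s ∩ t)) := by
  ext x
  simp [Submodule.mem_inf, B.mem_span_image, Set.subset_inter_iff]

def spanImage : BoundedLatticeHom (Set κ) (Submodule R M) where
  toFun s := Submodule.span R (B '' s)
  map_sup' s t := by simp only [Set.sup_eq_union, Set.image_union, Submodule.span_union]
  map_inf' s t := (B.span_image_inf_span_image s t).symm
  map_top' := by simp [B.span_eq]
  map_bot' := by simp

theorem spanImage_apply (s : Set κ) : B.spanImage s = Submodule.span R (B '' s) := rfl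

variable {κ' M' : Type*} [AddCommMonoid M'] [Module R M'] {B} {B' : Basis κ' R M'}
  {φ : M →ₗ[R] M'} {σ : κ → κ'}

theorem map_spanImage (h : ∀ q, φ (B q) = B' (σ q)) (s : Set κ) :
    (B.spanImage s).map φ = B'.spanImage (σ '' s) := by
  simp only [spanImage_apply, Submodule.map_span, Set.image_image, h]

theorem range_eq_spanImage_range (h : ∀ q, φ (B q) = B' (σ q)) :
    LinearMap.range φ = B'.spanImage (Set.range σ) := by
  rw [LinearMap.range_eq_map, ← map_top B.spanImage, map_spanImage h, Set.top_eq_univ,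
    Set.image_univ]

end Module.Basis

open scoped IsMulCommutative in
theorem monOp_add_single {M : Type*} [AddCommGroup M] [Module ℂ M] {n : ℕ}
    {f : Fin n → M →ₗ[ℂ] M} (hf : ∀ i j, Commute (f i) (f j)) (a : Fin n → ℕ) (i : Fin n) :
    monOp f (a + Pi.single i 1) = f i * monOp f a := by
  -- in the commutative submonoid generated by the `f i`, the list product is a `Finset` product
  have := Submonoid.isMulCommutative_closure _ (s := Set.range f)
    (by rintro _ ⟨i, rfl⟩ _ ⟨j, rfl⟩; exact hf i j)
  let g : Fin n → Submonoid.closure (Set.range f) :=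
    fun i => ⟨f i, Submonoid.subset_closure ⟨i, rfl⟩⟩
  have monOp_eq (a : Fin n → ℕ) : monOp f a = ↑(∏ j, g j ^ a j) := by
    rw [monOp, ← Fin.prod_ofFn, Submonoid.coe_list_prod]
    simp [g, Function.comp_def]
  have prod_add_single :
      ∏ j, g j ^ (a j + (Pi.single i 1 : Fin n → ℕ) j) = g i * ∏ j, g j ^ a j := by
    simp only [pow_add, Finset.prod_mul_distrib, Pi.single_apply, pow_ite,
      pow_one, pow_zero, Finset.prod_ite_eq', Finset.mem_univ, if_true, mul_comm]
  rw [monOp_eq, monOp_eq, Pi.add_def, prod_add_single, Submonoid.coe_mul]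

theorem injective_inter_distrib_of_free_general
    {M : Type v} [AddCommGroup M] [Module ℂ M]
    {n : ℕ} (f : Fin n → M →ₗ[ℂ] M)
    (hcomm : ∀ i j, (f i) ∘ₗ (f j) = (f j) ∘ₗ (f i))
    (hfree : ∃ (ι : Type v) (v : ι → M),
      LinearIndependent ℂ (fun q : (Fin n → ℕ) × ι => monOp f q.1 (v q.2)) ∧
      Submodule.span ℂ (Set.range fun q : (Fin n → ℕ) × ι => monOp f q.1 (v q.2)) = ⊤) :
    (∀ i, Function.Injective (f i)) ∧
    (∀ i j, i ≠ j →
      LinearMap.range (f i) ⊓ LinearMap.range (f j)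
        = Submodule.map (f i) (LinearMap.range (f j))) ∧
    (∀ S T : Finset (Fin n),
      (S.sup fun i => LinearMap.range (f i)) ⊓ (T.sup fun j => LinearMap.range (f j))
        = (S ×ˢ T).sup fun p => LinearMap.range (f p.1) ⊓ LinearMap.range (f p.2)) := by
  obtain ⟨ι, v, hli, hsp⟩ := hfree
  let B := Module.Basis.mk hli hsp.ge
  let σ (i : Fin n) : (Fin n → ℕ) × ι → (Fin n → ℕ) × ι := Prod.map (· + Pi.single i 1) id
  have hσ (i : Fin n) (q : (Fin n → ℕ) × ι) : f i (B q) = B (σ i q) := by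
    simp [B, σ, monOp_add_single (fun i j => hcomm i j), Module.End.mul_apply]
  have hrange (i : Fin n) : LinearMap.range (f i) = B.spanImage (Set.range (σ i)) :=
    Module.Basis.range_eq_spanImage_range (hσ i)
  refine ⟨fun i => ?_, fun i j hij => ?_, fun S T => ?_⟩
  · refine LinearMap.injective_of_linearIndependent (v := B) B.span_eq ?_
    rw [show ⇑(f i) ∘ B = B ∘ σ i from funext (hσ i)]
    exact B.linearIndependent.comp _ ((add_left_injective _).prodMap Function.injective_id)
  · rw [hrange, hrange, ← map_inf, Module.Basis.map_spanImage (hσ i),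
      Set.image_prodMap_add_const_range (Pi.single_sup_single_of_ne hij 1 1)]
    rfl
  · simp only [hrange]
    exact Finset.sup_map_inf_sup_map B.spanImage S T _ _

/-- If the `ℕ`-graded `ℂ`-vector space `M` is free over `ℂ[z₁,…,zₙ]` (with `zᵢ` acting
as the pairwise commuting homogeneous positive-degree endomorphism `fᵢ`), then each `fᵢ`
is injective, `fᵢ(M) ∩ fⱼ(M) = fᵢ(fⱼ(M))` for `i ≠ j`, and the subspaces `fᵢ(M)`
generate a distributive lattice:
`(∑_{i∈S} fᵢ(M)) ∩ (∑_{j∈T} fⱼ(M)) = ∑_{i∈S,j∈T} (fᵢ(M) ∩ fⱼ(M))`. -/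
theorem injective_inter_distrib_of_free
    {M : Type v} [AddCommGroup M] [Module ℂ M]
    (ℳ : ℕ → Submodule ℂ M) (hgr : DirectSum.IsInternal ℳ)
    {n : ℕ} (f : Fin n → M →ₗ[ℂ] M)
    (hcomm : ∀ i j, (f i) ∘ₗ (f j) = (f j) ∘ₗ (f i))
    (hhomog : ∀ i, ∃ d : ℕ, 1 ≤ d ∧ ∀ e : ℕ, ∀ m ∈ ℳ e, f i m ∈ ℳ (e + d))
    (hfree : ∃ (ι : Type v) (v : ι → M),
      LinearIndependent ℂ (fun q : (Fin n → ℕ) × ι => monOp f q.1 (v q.2)) ∧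
      Submodule.span ℂ (Set.range fun q : (Fin n → ℕ) × ι => monOp f q.1 (v q.2)) = ⊤) :
    (∀ i, Function.Injective (f i)) ∧
    (∀ i j, i ≠ j →
      LinearMap.range (f i) ⊓ LinearMap.range (f j)
        = Submodule.map (f i) (LinearMap.range (f j))) ∧
    (∀ S T : Finset (Fin n),
      (S.sup fun i => LinearMap.range (f i)) ⊓ (T.sup fun j => LinearMap.range (f j))
        = (S ×ˢ T).sup fun p => LinearMap.range (f p.1) ⊓ LinearMap.range (f p.2)) :=
  injective_inter_distrib_of_free_general f hcomm hfree
end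

section
/- Let f₁,…,fₙ be pairwise commuting ℂ-linear endomorphisms of a ℂ-vector space M such that: (1) each fᵢ is injective; (2) for all i ≠ j, fᵢ(M) ∩ fⱼ(M) = fᵢ(fⱼ(M)); and (3) for every k, f_k(M) ∩ (f₁(M)+⋯+f_{k−1}(M)) = (f_k(M)∩f₁(M)) + ⋯ + (f_k(M)∩f_{k−1}(M)). Then the sequence (f₁,…,fₙ) is regular: for every k and every m ∈ M with f_k(m) ∈ f₁(M)+⋯+f_{k−1}(M), one has m ∈ f₁(M)+⋯+f_{k−1}(M). -/
/-- If `f₁,…,fₙ` are pairwise commuting injective endomorphisms of a `ℂ`-vector space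
`M` with `fᵢ(M) ∩ fⱼ(M) = fᵢ(fⱼ(M))` for `i ≠ j` and
`f_k(M) ∩ (f₁(M)+⋯+f_{k−1}(M)) = (f_k(M)∩f₁(M)) + ⋯ + (f_k(M)∩f_{k−1}(M))` for all `k`,
then the sequence `(f₁,…,fₙ)` is regular. -/
theorem regular_of_injective_inter_distrib
    {M : Type*} [AddCommGroup M] [Module ℂ M]
    {n : ℕ} (f : Fin n → M →ₗ[ℂ] M)
    (hcomm : ∀ i j, (f i) ∘ₗ (f j) = (f j) ∘ₗ (f i))
    (hinj : ∀ i, Function.Injective (f i))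
    (hint : ∀ i j, i ≠ j →
      LinearMap.range (f i) ⊓ LinearMap.range (f j)
        = Submodule.map (f i) (LinearMap.range (f j)))
    (hdist : ∀ k : Fin n,
      LinearMap.range (f k) ⊓ (⨆ i : Fin n, ⨆ _ : i < k, LinearMap.range (f i))
        = ⨆ i : Fin n, ⨆ _ : i < k, (LinearMap.range (f k) ⊓ LinearMap.range (f i))) :
    ∀ k : Fin n, ∀ m : M,
      f k m ∈ (⨆ i : Fin n, ⨆ _ : i < k, LinearMap.range (f i)) →
      m ∈ (⨆ i : Fin n, ⨆ _ : i < k, LinearMap.range (f i)) := by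
  intro k m hm
  have h1 : f k m ∈ Submodule.map (f k) (⨆ i : Fin n, ⨆ _ : i < k, LinearMap.range (f i)) := by
    have h0 : f k m ∈ LinearMap.range (f k) ⊓ (⨆ i : Fin n, ⨆ _ : i < k, LinearMap.range (f i)) :=
      ⟨⟨m, rfl⟩, hm⟩
    rw [hdist k] at h0
    have heq : (⨆ i : Fin n, ⨆ _ : i < k, (LinearMap.range (f k) ⊓ LinearMap.range (f i)))
        = Submodule.map (f k) (⨆ i : Fin n, ⨆ _ : i < k, LinearMap.range (f i)) := by
      rw [Submodule.map_iSup]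
      refine iSup_congr fun i => ?_
      rw [Submodule.map_iSup]
      exact iSup_congr fun hi => hint k i hi.ne'
    rwa [heq] at h0
  obtain ⟨m2, hm2, hmm⟩ := h1
  rwa [hinj k hmm] at hm2
end

section
/- Let (m, a) be a sorted pair of n-tuples and k ≥ 0. Define, for indices 1 ≤ i < j ≤ n, 'i attacks j' to mean m_j − m_i − 1 + k + ε(a_i, a_j) ≥ 0, where ε(u,v) = 1 if u > v and 0 otherwise. Then there exists a nondecreasing function h : {1,…,n} → {1,…,n} with h(i) ≥ i for all i, such that for all i < j: i attacks j if and only if j ≤ h(i). (In other words, the attack relation is the region D(π) = {(i,j) : i < j ≤ h(i)} of a Dyck path π.) -/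
/-- For a sorted pair `(m, a)` and `k ≥ 0`, the attack relation
`i attacks j ⇔ m_j − m_i − 1 + k + ε(a_i,a_j) ≥ 0` (for `i < j`) is the region of a
Dyck path: there is a nondecreasing `h : Fin n → Fin n` with `h(i) ≥ i` such that for
all `i < j`, `i` attacks `j` iff `j ≤ h(i)`. -/
theorem attack_relation_is_dyck_path (n : ℕ) (hn : 1 ≤ n) (k : ℕ)
    (m a : Fin n → ℕ) (ha : ∀ i, 1 ≤ a i)
    (hm : ∀ i j : Fin n, i ≤ j → m j ≤ m i)
    (hsorted : ∀ i j : Fin n, i < j → m i = m j → a i ≤ a j) :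
    ∃ h : Fin n → Fin n, Monotone h ∧ (∀ i, i ≤ h i) ∧
      ∀ i j : Fin n, i < j →
        ((0 : ℤ) ≤ (m j : ℤ) - (m i : ℤ) - 1 + (k : ℤ) +
            (if a i > a j then 1 else 0) ↔ j ≤ h i) := by
  classical
  set A : Fin n → Fin n → Prop := fun i j =>
    (0 : ℤ) ≤ (m j : ℤ) - (m i : ℤ) - 1 + (k : ℤ) + (if a i > a j then 1 else 0) with hA
  -- downward closedness in j
  have key1 : ∀ i j j' : Fin n, i < j → j ≤ j' → A i j' → A i j := by
    intro i j j' hij hjj' h'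
    rcases eq_or_lt_of_le hjj' with rfl | hlt
    · exact h'
    · simp only [hA] at h' ⊢
      have hmj : m j' ≤ m j := hm j j' hjj'
      rcases eq_or_lt_of_le hmj with heq | hstrict
      · -- m j = m j', so a j ≤ a j'
        have haj : a j ≤ a j' := hsorted j j' hlt heq.symm
        have hε : (if a i > a j' then (1:ℤ) else 0) ≤ (if a i > a j then 1 else 0) := by
          split_ifs with h1 h2 h2
          · norm_num
          · exact absurd (lt_of_le_of_lt haj h1) h2
          · norm_num
          · norm_num
        have heq' : (m j' : ℤ) = (m j : ℤ) := by exact_mod_cast heq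
        linarith
      · have hε1 : (if a i > a j' then (1:ℤ) else 0) ≤ 1 := by split_ifs <;> norm_num
        have hε2 : (0:ℤ) ≤ (if a i > a j then 1 else 0) := by split_ifs <;> norm_num
        have : (m j' : ℤ) + 1 ≤ (m j : ℤ) := by exact_mod_cast hstrict
        linarith
  -- upward in i
  have key2 : ∀ i i' j : Fin n, i ≤ i' → i' < j → A i j → A i' j := by
    intro i i' j hii' hij h'
    rcases eq_or_lt_of_le hii' with rfl | hlt
    · exact h'
    · simp only [hA] at h' ⊢
      have hmi : m i' ≤ m i := hm i i' hii'
      rcases eq_or_lt_of_le hmi with heq | hstrict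
      · have hai : a i ≤ a i' := hsorted i i' hlt heq.symm
        have hε : (if a i > a j then (1:ℤ) else 0) ≤ (if a i' > a j then 1 else 0) := by
          split_ifs with h1 h2 h2
          · norm_num
          · exact absurd (lt_of_lt_of_le h1 hai) h2
          · norm_num
          · norm_num
        have : (m i' : ℤ) = (m i : ℤ) := by exact_mod_cast heq
        linarith
      · have hε1 : (if a i > a j then (1:ℤ) else 0) ≤ 1 := by split_ifs <;> norm_num
        have hε2 : (0:ℤ) ≤ (if a i' > a j then 1 else 0) := by split_ifs <;> norm_num
        have : (m i' : ℤ) + 1 ≤ (m i : ℤ) := by exact_mod_cast hstrict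
        linarith
  set S : Fin n → Finset (Fin n) := fun i =>
    insert i (Finset.univ.filter (fun j => i < j ∧ A i j)) with hS
  have hSne : ∀ i, (S i).Nonempty := fun i => ⟨i, Finset.mem_insert_self i _⟩
  set h : Fin n → Fin n := fun i => (S i).max' (hSne i) with hh
  have hih : ∀ i, i ≤ h i := fun i => Finset.le_max' _ i (Finset.mem_insert_self i _)
  have hAh : ∀ i, i < h i → A i (h i) := by
    intro i hlt
    have := (S i).max'_mem (hSne i)
    rw [Finset.mem_insert] at this
    rcases this with heq | hmem
    · exact absurd heq.symm (ne_of_lt hlt)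
    · exact (Finset.mem_filter.mp hmem).2.2
  refine ⟨h, ?_, hih, ?_⟩
  · intro i i' hii'
    by_cases hc : h i ≤ i'
    · exact le_trans hc (hih i')
    · push_neg at hc
      have hAi : A i (h i) := hAh i (lt_of_le_of_lt hii' hc)
      have : A i' (h i) := key2 i i' (h i) hii' hc hAi
      exact Finset.le_max' _ _ (Finset.mem_insert_of_mem
        (Finset.mem_filter.mpr ⟨Finset.mem_univ _, hc, this⟩))
  · intro i j hij
    constructor
    · intro hatt
      exact Finset.le_max' _ _ (Finset.mem_insert_of_mem
        (Finset.mem_filter.mpr ⟨Finset.mem_univ _, hij, hatt⟩))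
    · intro hjh
      have hlt : i < h i := lt_of_lt_of_le hij hjh
      exact key1 i j (h i) hij hjh (hAh i hlt)
end

section
/- Let (m, a) be a sorted pair of n-tuples, let k ≥ 1, and let b : {1,…,n} → ℕ_{≥1} be an arbitrary label. Then dinv_k(m,a,b) = dinv_k(m,a) + inv_{π_k(m,a)}(b); explicitly: ∑_{1≤i<j≤n} max(m_j − m_i − 1 + k + ε(a_i,a_j) + ε(b_i,b_j), 0) = ∑_{1≤i<j≤n} max(m_j − m_i − 1 + k + ε(a_i,a_j), 0) + #{(i,j) : i < j, m_j − m_i − 1 + k + ε(a_i,a_j) ≥ 0 and b_i > b_j}. -/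
/-- For a sorted pair `(m, a)`, `k ≥ 1`, and an arbitrary label `b`:
`dinv_k(m,a,b) = dinv_k(m,a) + inv_{π_k(m,a)}(b)`. -/
theorem dinv_decomposition (n : ℕ) (hn : 1 ≤ n) (k : ℕ) (hk : 1 ≤ k)
    (m a b : Fin n → ℕ) (ha : ∀ i, 1 ≤ a i) (hb : ∀ i, 1 ≤ b i)
    (hm : ∀ i j : Fin n, i ≤ j → m j ≤ m i)
    (hsorted : ∀ i j : Fin n, i < j → m i = m j → a i ≤ a j) :
    (∑ p ∈ Finset.univ.filter (fun p : Fin n × Fin n => p.1 < p.2),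
        max ((m p.2 : ℤ) - (m p.1 : ℤ) - 1 + (k : ℤ)
          + (if a p.1 > a p.2 then 1 else 0)
          + (if b p.1 > b p.2 then 1 else 0)) 0)
      = (∑ p ∈ Finset.univ.filter (fun p : Fin n × Fin n => p.1 < p.2),
          max ((m p.2 : ℤ) - (m p.1 : ℤ) - 1 + (k : ℤ)
            + (if a p.1 > a p.2 then 1 else 0)) 0)
        + ((Finset.univ.filter (fun p : Fin n × Fin n => p.1 < p.2 ∧
            (0 : ℤ) ≤ (m p.2 : ℤ) - (m p.1 : ℤ) - 1 + (k : ℤ)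
              + (if a p.1 > a p.2 then 1 else 0) ∧
            b p.1 > b p.2)).card : ℤ) := by
  have hcard : ((Finset.univ.filter (fun p : Fin n × Fin n => p.1 < p.2 ∧
        (0 : ℤ) ≤ (m p.2 : ℤ) - (m p.1 : ℤ) - 1 + (k : ℤ)
          + (if a p.1 > a p.2 then 1 else 0) ∧
        b p.1 > b p.2)).card : ℤ)
      = ∑ p ∈ Finset.univ.filter (fun p : Fin n × Fin n => p.1 < p.2),
          (if ((0 : ℤ) ≤ (m p.2 : ℤ) - (m p.1 : ℤ) - 1 + (k : ℤ)
            + (if a p.1 > a p.2 then 1 else 0) ∧ b p.1 > b p.2) then 1 else 0) := by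
    rw [Finset.sum_boole, Finset.filter_filter]
  rw [hcard, ← Finset.sum_add_distrib]
  apply Finset.sum_congr rfl
  intro p hp
  set t : ℤ := (m p.2 : ℤ) - (m p.1 : ℤ) - 1 + (k : ℤ)
    + (if a p.1 > a p.2 then 1 else 0) with ht
  by_cases hbp : b p.1 > b p.2 <;> simp [hbp, max_def] <;> split_ifs <;> omega
end

section
/- Let R = ℂ[X₁,…,Xₙ] be a polynomial ring, let r₁ < r₂ < ⋯ < r_m be indices in {1,…,n}, and for each ℓ let A_ℓ be a subset of {i : i < r_ℓ}. Define f_ℓ = ∏_{i ∈ A_ℓ} (X_i − X_{r_ℓ}) ∈ R. Then (f₁,…,f_m) is a (weakly) regular sequence in R: for every ℓ ∈ {1,…,m} and every g ∈ R, if f_ℓ·g lies in the ideal generated by f₁,…,f_{ℓ−1}, then g lies in the ideal generated by f₁,…,f_{ℓ−1}. -/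
open MvPolynomial

/-- Let `r₁ < ⋯ < r_m` be indices in `{1,…,n}` and for each `ℓ` let `A_ℓ` be a set of
indices `i < r_ℓ`.  Then the polynomials `f_ℓ = ∏_{i ∈ A_ℓ} (X_i − X_{r_ℓ})` form a
weakly regular sequence in `ℂ[X₁,…,Xₙ]`: if `f_ℓ·g ∈ (f₁,…,f_{ℓ−1})` then
`g ∈ (f₁,…,f_{ℓ−1})`. -/
theorem variable_difference_products_regular
    (n m : ℕ) (r : Fin m → Fin n) (hr : StrictMono r)
    (A : Fin m → Finset (Fin n)) (hA : ∀ ℓ, ∀ i ∈ A ℓ, i < r ℓ) :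
    ∀ ℓ : Fin m, ∀ g : MvPolynomial (Fin n) ℂ,
      (∏ i ∈ A ℓ, (X i - X (r ℓ))) * g
          ∈ Ideal.span ((fun j : Fin m => ∏ i ∈ A j, (X i - X (r j) :
              MvPolynomial (Fin n) ℂ)) '' {j | j < ℓ}) →
      g ∈ Ideal.span ((fun j : Fin m => ∏ i ∈ A j, (X i - X (r j) :
              MvPolynomial (Fin n) ℂ)) '' {j | j < ℓ}) := by
  intro ℓ g hg
  set k := r ℓ with hk
  set T := MvPolynomial {i : Fin n // i ≠ k} ℂ with hT
  set e : MvPolynomial (Fin n) ℂ ≃ₐ[ℂ] Polynomial T :=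
    (renameEquiv ℂ (Equiv.optionSubtypeNe k).symm).trans (optionEquivLeft ℂ _) with he
  have heX : ∀ (i : Fin n) (hi : i ≠ k), e (X i) = Polynomial.C (X ⟨i, hi⟩) := by
    intro i hi
    rw [he, AlgEquiv.trans_apply, renameEquiv_apply, rename_X,
      Equiv.optionSubtypeNe_symm_of_ne hi, optionEquivLeft_X_some]
  have heXk : e (X k) = Polynomial.X := by
    rw [he, AlgEquiv.trans_apply, renameEquiv_apply, rename_X,
      Equiv.optionSubtypeNe_symm_self, optionEquivLeft_X_none]
  set F : Fin m → MvPolynomial (Fin n) ℂ :=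
    fun j => ∏ i ∈ A j, (X i - X (r j)) with hF
  set S : Set (MvPolynomial (Fin n) ℂ) := F '' {j | j < ℓ} with hS
  -- membership transfer along e
  have hmem : ∀ x : MvPolynomial (Fin n) ℂ,
      x ∈ Ideal.span S ↔ e x ∈ Ideal.span (⇑e '' S) := by
    intro x
    constructor
    · intro hx
      have := Ideal.mem_map_of_mem (e : MvPolynomial (Fin n) ℂ →+* Polynomial T) hx
      rwa [Ideal.map_span] at this
    · intro hx
      have := Ideal.mem_map_of_mem (e.symm : Polynomial T →+* MvPolynomial (Fin n) ℂ) hx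
      rw [Ideal.map_span] at this
      have himg : (⇑(e.symm : Polynomial T →+* MvPolynomial (Fin n) ℂ)) '' (⇑e '' S) = S := by
        rw [Set.image_image]
        simp
      rw [himg] at this
      simpa using this
  -- every e (F j) for j < ℓ is a constant polynomial
  have hconst : ∀ j : Fin m, j < ℓ → ∃ q : T, e (F j) = Polynomial.C q := by
    intro j hj
    have hrj : r j ≠ k := ne_of_lt (hr hj)
    refine ⟨∏ i ∈ (A j).attach,
      (X ⟨i.1, ne_of_lt (lt_trans (hA j i.1 i.2) (hr hj))⟩ - X ⟨r j, hrj⟩), ?_⟩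
    rw [hF, map_prod, map_prod, ← Finset.prod_attach (A j) (fun i => e (X i - X (r j)))]
    refine Finset.prod_congr rfl ?_
    intro i _
    rw [map_sub, heX i.1 (ne_of_lt (lt_trans (hA j i.1 i.2) (hr hj))), heX (r j) hrj,
      map_sub]
  set s₀ : Set T := {q : T | Polynomial.C q ∈ ⇑e '' S} with hs₀
  have himg : Polynomial.C '' s₀ = ⇑e '' S := by
    ext p
    constructor
    · rintro ⟨q, hq, rfl⟩; exact hq
    · intro hp
      obtain ⟨x, hx, rfl⟩ := hp
      obtain ⟨j, hj, rfl⟩ := hx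
      obtain ⟨q, hq⟩ := hconst j hj
      refine ⟨q, ?_, hq.symm⟩
      show Polynomial.C q ∈ ⇑e '' S
      rw [← hq]
      exact Set.mem_image_of_mem _ (Set.mem_image_of_mem _ hj)
  set I₀ : Ideal T := Ideal.span s₀ with hI₀
  have hspan : Ideal.span (⇑e '' S) = I₀.map (Polynomial.C : T →+* Polynomial T) := by
    rw [hI₀, Ideal.map_span, himg]
  -- the monic polynomial
  have hine : ∀ i ∈ A ℓ, i ≠ k := fun i hi => ne_of_lt (hA ℓ i hi)
  set P : Polynomial T := ∏ i ∈ (A ℓ).attach,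
    (Polynomial.X - Polynomial.C (X ⟨i.1, hine i.1 i.2⟩)) with hP
  have hPmonic : P.Monic :=
    Polynomial.monic_prod_of_monic _ _ (fun _ _ => Polynomial.monic_X_sub_C _)
  have heF : e (F ℓ) = (-1) ^ (A ℓ).card * P := by
    rw [hF, map_prod, ← Finset.prod_attach (A ℓ) (fun i => e (X i - X (r ℓ)))]
    rw [hP, ← Finset.card_attach, ← Finset.prod_const, ← Finset.prod_mul_distrib]
    refine Finset.prod_congr rfl ?_
    intro i _
    rw [map_sub, heX i.1 (hine i.1 i.2), ← hk, heXk]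
    ring
  -- transfer hypothesis
  have hg' : e (F ℓ) * e g ∈ Ideal.span (⇑e '' S) := by
    have := (hmem _).mp hg
    rwa [map_mul] at this
  have hPg : P * e g ∈ I₀.map (Polynomial.C : T →+* Polynomial T) := by
    rw [← hspan]
    have := Ideal.mul_mem_left _ ((-1) ^ (A ℓ).card) hg'
    rw [heF] at this
    have hone : ((-1 : Polynomial T) ^ (A ℓ).card) * ((-1) ^ (A ℓ).card) = 1 := by
      rw [← mul_pow]; norm_num
    have heq : ((-1 : Polynomial T) ^ (A ℓ).card) * ((-1) ^ (A ℓ).card * P * e g)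
        = (((-1 : Polynomial T) ^ (A ℓ).card) * ((-1) ^ (A ℓ).card)) * (P * e g) := by
      ring
    rw [heq, hone, one_mul] at this
    exact this
  -- pass to the quotient
  set φ := Ideal.Quotient.mk I₀ with hφ
  rw [Ideal.mem_map_C_iff] at hPg
  have h0 : (P * e g).map φ = 0 := by
    ext d
    rw [Polynomial.coeff_map, Polynomial.coeff_zero, hφ, Ideal.Quotient.eq_zero_iff_mem]
    exact hPg d
  rw [Polynomial.map_mul] at h0
  have hq0 : (e g).map φ = 0 := by
    apply (hPmonic.map φ).isRegular.left
    show Polynomial.map φ P * Polynomial.map φ (e g) = Polynomial.map φ P * 0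
    rw [mul_zero]
    exact h0
  have hginJ : e g ∈ I₀.map (Polynomial.C : T →+* Polynomial T) := by
    rw [Ideal.mem_map_C_iff]
    intro d
    rw [← Ideal.Quotient.eq_zero_iff_mem, ← hφ, ← Polynomial.coeff_map, hq0,
      Polynomial.coeff_zero]
  exact (hmem g).mpr (by rwa [hspan])
end
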